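/- arXiv:1401.0917 — 5 statements merged into one kernel-verified Lean document; each statement's English description precedes it below -/
import Mathlib

section
/- Let a, \tau \in [0,1] with \tau \le 1/2. Suppose h and f are nonnegative, non-decreasing functions on [0,1], and f is constant on [a,1]. Then \int_\tau^1 h(x)(f(x)-f(x-\tau))^2 dx \le \int_0^1 h(x) f(x)^2 \mathbf{1}_{\{x \ge 1-\tau\}} dx. -/
open MeasureTheory Set

private lemma monoOn_mul_aux {p q : ℝ → ℝ} {s : Set ℝ} (hp : MonotoneOn p s)
    (hq : MonotoneOn q s) (hp0 : ∀ x ∈ s, 0 ≤ p x) (hq0 : ∀ x ∈ s, 0 ≤ q x) :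
    MonotoneOn (fun x => p x * q x ^ 2) s := by
  intro x hx y hy hxy
  have h1 := hp hx hy hxy
  have h2 := hq hx hy hxy
  have := hp0 x hx; have := hq0 x hx
  dsimp only
  gcongr
  exact (hp0 x hx).trans h1

set_option maxHeartbeats 1000000 in
/-- Lemma (uniform variable shift bound, case `τ ≤ 1/2`): for `h, f` nonnegative and
non-decreasing on `[0,1]` with `f` constant on `[a,1]`, and `τ ≤ 1/2`,
`∫_τ^1 h(x)(f(x)-f(x-τ))² dx ≤ ∫_0^1 h(x) f(x)² 1_{x ≥ 1-τ} dx`. -/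
theorem shift_bound_tail (a τ : ℝ) (ha : a ∈ Set.Icc (0:ℝ) 1) (hτ : τ ∈ Set.Icc (0:ℝ) 1)
    (hτhalf : τ ≤ 1 / 2) (h f : ℝ → ℝ)
    (hh0 : ∀ x ∈ Set.Icc (0:ℝ) 1, 0 ≤ h x) (hf0 : ∀ x ∈ Set.Icc (0:ℝ) 1, 0 ≤ f x)
    (hhm : MonotoneOn h (Set.Icc (0:ℝ) 1)) (hfm : MonotoneOn f (Set.Icc (0:ℝ) 1))
    (hconst : ∀ x ∈ Set.Icc a 1, f x = f a) :
    ∫ x in Set.Icc τ 1, h x * (f x - f (x - τ)) ^ 2 ≤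
      ∫ x in Set.Icc (0:ℝ) 1, (Set.Ici (1 - τ)).indicator (fun x => h x * f x ^ 2) x := by
  obtain ⟨hτ0, hτ1⟩ := hτ
  have hτhalf' : τ ≤ 1 - τ := by linarith
  -- subset facts
  have hsub1 : Set.Icc τ 1 ⊆ Set.Icc (0:ℝ) 1 := Icc_subset_Icc hτ0 le_rfl
  have hsub2 : Set.Icc (0:ℝ) (1 - τ) ⊆ Set.Icc (0:ℝ) 1 := Icc_subset_Icc le_rfl (by linarith)
  -- membership helpers
  have hmem_sub : ∀ x ∈ Set.Icc τ 1, x - τ ∈ Set.Icc (0:ℝ) 1 := by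
    intro x hx; exact ⟨by linarith [hx.1], by linarith [hx.2]⟩
  have hmem_add : ∀ x ∈ Set.Icc (0:ℝ) (1 - τ), x + τ ∈ Set.Icc (0:ℝ) 1 := by
    intro x hx; exact ⟨by linarith [hx.1], by linarith [hx.2]⟩
  -- F1 = h x * f x ^ 2 monotone on [0,1]
  have hF1 : MonotoneOn (fun x => h x * f x ^ 2) (Set.Icc (0:ℝ) 1) :=
    monoOn_mul_aux hhm hfm hh0 hf0
  -- F2 = h x * f (x - τ) ^ 2 monotone on [τ,1]
  have hfshift : MonotoneOn (fun x => f (x - τ)) (Set.Icc τ 1) := by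
    intro x hx y hy hxy
    exact hfm (hmem_sub x hx) (hmem_sub y hy) (by linarith)
  have hF2 : MonotoneOn (fun x => h x * f (x - τ) ^ 2) (Set.Icc τ 1) :=
    monoOn_mul_aux (hhm.mono hsub1) hfshift (fun x hx => hh0 x (hsub1 hx))
      (fun x hx => hf0 _ (hmem_sub x hx))
  -- G = h (x + τ) * f x ^ 2 monotone on [0, 1-τ]
  have hhshift : MonotoneOn (fun x => h (x + τ)) (Set.Icc (0:ℝ) (1 - τ)) := by
    intro x hx y hy hxy
    exact hhm (hmem_add x hx) (hmem_add y hy) (by linarith)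
  have hG : MonotoneOn (fun x => h (x + τ) * f x ^ 2) (Set.Icc (0:ℝ) (1 - τ)) :=
    monoOn_mul_aux hhshift (hfm.mono hsub2) (fun x hx => hh0 _ (hmem_add x hx))
      (fun x hx => hf0 x (hsub2 hx))
  -- interval integrability
  have iF1 : ∀ c d : ℝ, c ≤ d → Set.Icc c d ⊆ Set.Icc (0:ℝ) 1 →
      IntervalIntegrable (fun x => h x * f x ^ 2) volume c d := by
    intro c d hcd hs
    have := (hF1.mono hs).integrableOn_isCompact (μ := volume) (isCompact_Icc (a := c) (b := d))
    rw [← uIcc_of_le hcd] at this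
    exact this.intervalIntegrable
  have iF1a := iF1 τ 1 hτ1 hsub1
  have iF1b := iF1 τ (1 - τ) hτhalf' (Icc_subset_Icc hτ0 (by linarith))
  have iF1c := iF1 (1 - τ) 1 (by linarith) (Icc_subset_Icc (by linarith) le_rfl)
  have iF2 : IntervalIntegrable (fun x => h x * f (x - τ) ^ 2) volume τ 1 := by
    have := hF2.integrableOn_isCompact (μ := volume) (isCompact_Icc (a := τ) (b := 1))
    rw [← uIcc_of_le hτ1] at this
    exact this.intervalIntegrable
  have iG : ∀ c d : ℝ, c ≤ d → Set.Icc c d ⊆ Set.Icc (0:ℝ) (1 - τ) →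
      IntervalIntegrable (fun x => h (x + τ) * f x ^ 2) volume c d := by
    intro c d hcd hs
    have := (hG.mono hs).integrableOn_isCompact (μ := volume) (isCompact_Icc (a := c) (b := d))
    rw [← uIcc_of_le hcd] at this
    exact this.intervalIntegrable
  have iGa := iG 0 τ hτ0 (Icc_subset_Icc le_rfl hτhalf')
  have iGb := iG τ (1 - τ) hτhalf' (Icc_subset_Icc hτ0 le_rfl)
  -- rewrite both sides as interval integrals
  have hLHS : ∫ x in Set.Icc τ 1, h x * (f x - f (x - τ)) ^ 2
      = ∫ x in τ..1, h x * (f x - f (x - τ)) ^ 2 := by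
    rw [intervalIntegral.integral_of_le hτ1, integral_Icc_eq_integral_Ioc]
  have hRHS : ∫ x in Set.Icc (0:ℝ) 1, (Set.Ici (1 - τ)).indicator (fun x => h x * f x ^ 2) x
      = ∫ x in (1 - τ)..1, h x * f x ^ 2 := by
    rw [setIntegral_indicator measurableSet_Ici]
    have : Set.Icc (0:ℝ) 1 ∩ Set.Ici (1 - τ) = Set.Icc (1 - τ) 1 := by
      ext x; simp only [mem_inter_iff, mem_Icc, mem_Ici]
      constructor
      · rintro ⟨⟨_, h2⟩, h3⟩; exact ⟨h3, h2⟩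
      · rintro ⟨h1, h2⟩; exact ⟨⟨by linarith, h2⟩, h1⟩
    rw [this, intervalIntegral.integral_of_le (by linarith), integral_Icc_eq_integral_Ioc]
  rw [hLHS, hRHS]
  -- pointwise bound: h x * (f x - f (x-τ))² ≤ h x * f x ² - h x * f (x-τ)²
  have key : ∫ x in τ..1, h x * (f x - f (x - τ)) ^ 2
      ≤ ∫ x in τ..1, (h x * f x ^ 2 - h x * f (x - τ) ^ 2) := by
    apply intervalIntegral.integral_mono_on hτ1 _ (iF1a.sub iF2)
    · intro x hx
      have hu : 0 ≤ f (x - τ) := hf0 _ (hmem_sub x hx)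
      have huv : f (x - τ) ≤ f x := hfm (hmem_sub x hx) (hsub1 hx) (by linarith)
      have hh : 0 ≤ h x := hh0 x (hsub1 hx)
      have : (f x - f (x - τ)) ^ 2 ≤ f x ^ 2 - f (x - τ) ^ 2 := by nlinarith
      nlinarith [mul_nonneg hh (sub_nonneg.2 this)]
    · -- integrability of LHS integrand: dominated by F1
      have hF3 : IntegrableOn (fun x => h x * (f x - f (x - τ)) ^ 2) (Set.Icc τ 1) volume := by
        have mh : AEMeasurable h (volume.restrict (Set.Icc τ 1)) :=
          aemeasurable_restrict_of_monotoneOn measurableSet_Icc (hhm.mono hsub1)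
        have mf : AEMeasurable f (volume.restrict (Set.Icc τ 1)) :=
          aemeasurable_restrict_of_monotoneOn measurableSet_Icc (hfm.mono hsub1)
        have mfs : AEMeasurable (fun x => f (x - τ)) (volume.restrict (Set.Icc τ 1)) :=
          aemeasurable_restrict_of_monotoneOn measurableSet_Icc hfshift
        have meas : AEMeasurable (fun x => h x * (f x - f (x - τ)) ^ 2)
            (volume.restrict (Set.Icc τ 1)) := mh.mul ((mf.sub mfs).pow_const 2)
        apply Integrable.mono ((hF1.mono hsub1).integrableOn_isCompact isCompact_Icc)
          meas.aestronglyMeasurable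
        filter_upwards [ae_restrict_mem measurableSet_Icc] with x hx
        have hu : 0 ≤ f (x - τ) := hf0 _ (hmem_sub x hx)
        have huv : f (x - τ) ≤ f x := hfm (hmem_sub x hx) (hsub1 hx) (by linarith [hτ0])
        have hh : 0 ≤ h x := hh0 x (hsub1 hx)
        have hfx : 0 ≤ f x := hf0 x (hsub1 hx)
        rw [Real.norm_eq_abs, Real.norm_eq_abs, abs_of_nonneg (by positivity),
          abs_of_nonneg (by positivity)]
        nlinarith [mul_nonneg hh (mul_nonneg hu (sub_nonneg.2 huv)),
          mul_nonneg hh (mul_nonneg hu (hf0 x (hsub1 hx)))]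
      rw [← uIcc_of_le hτ1] at hF3
      exact hF3.intervalIntegrable
  have split1 : ∫ x in τ..1, (h x * f x ^ 2 - h x * f (x - τ) ^ 2)
      = (∫ x in τ..1, h x * f x ^ 2) - ∫ x in τ..1, h x * f (x - τ) ^ 2 :=
    intervalIntegral.integral_sub iF1a iF2
  -- change of variables
  have cov : ∫ x in τ..1, h x * f (x - τ) ^ 2 = ∫ x in (0:ℝ)..(1 - τ), h (x + τ) * f x ^ 2 := by
    have cov0 := intervalIntegral.integral_comp_sub_right (a := τ) (b := 1)
      (fun y => h (y + τ) * f y ^ 2) τ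
    simp only [sub_add_cancel, sub_self] at cov0
    convert cov0 using 2 <;> ring
  -- lower bound for shifted integral
  have lb : (∫ x in τ..(1 - τ), h x * f x ^ 2) ≤ ∫ x in (0:ℝ)..(1 - τ), h (x + τ) * f x ^ 2 := by
    have hsplit : ∫ x in (0:ℝ)..(1 - τ), h (x + τ) * f x ^ 2
        = (∫ x in (0:ℝ)..τ, h (x + τ) * f x ^ 2) + ∫ x in τ..(1 - τ), h (x + τ) * f x ^ 2 :=
      (intervalIntegral.integral_add_adjacent_intervals iGa iGb).symm
    have h1 : 0 ≤ ∫ x in (0:ℝ)..τ, h (x + τ) * f x ^ 2 := by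
      apply intervalIntegral.integral_nonneg hτ0
      intro x hx
      have : 0 ≤ h (x + τ) := hh0 _ ⟨by linarith [hx.1], by linarith [hx.2]⟩
      positivity
    have h2 : (∫ x in τ..(1 - τ), h x * f x ^ 2) ≤ ∫ x in τ..(1 - τ), h (x + τ) * f x ^ 2 := by
      apply intervalIntegral.integral_mono_on hτhalf' iF1b iGb
      intro x hx
      have hmem : x ∈ Set.Icc (0:ℝ) 1 := ⟨by linarith [hx.1], by linarith [hx.2]⟩
      have hmem' : x + τ ∈ Set.Icc (0:ℝ) 1 := ⟨by linarith [hx.1], by linarith [hx.2]⟩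
      have : h x ≤ h (x + τ) := hhm hmem hmem' (by linarith)
      have := hf0 x hmem
      nlinarith
    linarith
  -- split F1 integral
  have split2 : ∫ x in τ..1, h x * f x ^ 2
      = (∫ x in τ..(1 - τ), h x * f x ^ 2) + ∫ x in (1 - τ)..1, h x * f x ^ 2 :=
    (intervalIntegral.integral_add_adjacent_intervals iF1b iF1c).symm
  linarith
end

section
/- Let a, \tau \in [0,1] with a \le \tau \le 1/2. Suppose h and f are nonnegative, non-decreasing functions on [0,1], and f is constant on [a,1]. Then \int_\tau^1 h(x)(f(x)-f(x-\tau))^2 dx \le 2a \int_0^1 h(x) f(x)^2 dx. -/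
/-!
For `x ≥ τ ≥ a` we have `f x = f a`, so the integrand is `h x * k x` with
`k x = (f a - f (x - τ))²`. Since `f ≤ f a`, `k` is non-increasing, bounded by `f a²`, and it
vanishes for `x ≥ τ + a`, whence `∫_τ^1 k ≤ a f(a)²`. Chebyshev's integral inequality for the
non-decreasing `h` and the non-increasing `k` on `[τ, 1]`, an interval of length `≥ 1/2`, gives
`∫_τ^1 h k ≤ 2 (∫_τ^1 h)(∫_τ^1 k) ≤ 2a f(a)² ∫_τ^1 h`, and `f(a)² ∫_τ^1 h = ∫_τ^1 h f² ≤ ∫_0^1 h f²`.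
-/
open MeasureTheory Set

section Chebyshev

variable {α : Type*} [MeasurableSpace α] {μ : Measure α} {f g : α → ℝ}

theorem integral_sub_const_mul_sub_const [IsFiniteMeasure μ] (hf : Integrable f μ)
    (hg : Integrable g μ) (hfg : Integrable (fun x => f x * g x) μ) (c d : ℝ) :
    ∫ x, (f x - c) * (g x - d) ∂μ =
      ∫ x, f x * g x ∂μ - (∫ x, f x ∂μ) * d - c * ∫ x, g x ∂μ + μ.real univ * (c * d) := by
  have hexp : (fun x => (f x - c) * (g x - d)) =
      fun x => f x * g x - f x * d - c * g x + c * d := by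
    funext x; ring
  rw [hexp, integral_add, integral_sub, integral_sub, integral_mul_const, integral_const_mul,
    integral_const, smul_eq_mul]
  all_goals fun_prop

theorem AntivaryOn.measureReal_mul_setIntegral_mul_le {s : Set α} (hs : MeasurableSet s)
    (hμs : μ s ≠ ⊤) (hfg : AntivaryOn f g s) (hf : IntegrableOn f s μ) (hg : IntegrableOn g s μ)
    (hfg' : IntegrableOn (fun x => f x * g x) s μ) :
    μ.real s * ∫ x in s, f x * g x ∂μ ≤ (∫ x in s, f x ∂μ) * ∫ x in s, g x ∂μ := by
  have : IsFiniteMeasure (μ.restrict s) := isFiniteMeasure_restrict.2 hμs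
  set C := ∫ x in s, f x * g x ∂μ
  set F := ∫ x in s, f x ∂μ
  set G := ∫ x in s, g x ∂μ
  -- `∫_s ∫_s (f x - f y) * (g x - g y) = 2 * (μ.real s * C - F * G)` and the integrand is `≤ 0`.
  have hpair : ∀ y ∈ s, ∫ x in s, (f x - f y) * (g x - g y) ∂μ ≤ 0 := fun y hy =>
    setIntegral_nonpos hs fun x hx => hfg.sub_mul_sub_nonpos hy hx
  have hsum : ∫ y in s, (C - F * g y - f y * G + μ.real s * (f y * g y)) ∂μ ≤ 0 := by
    refine (setIntegral_congr_fun hs fun y _ => ?_).trans_le (setIntegral_nonpos hs hpair)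
    rw [integral_sub_const_mul_sub_const hf hg hfg', measureReal_restrict_apply_univ]
  have hf : Integrable f (μ.restrict s) := hf
  have hg : Integrable g (μ.restrict s) := hg
  have hfg' : Integrable (fun x => f x * g x) (μ.restrict s) := hfg'
  rw [integral_add, integral_sub, integral_sub, integral_const_mul, integral_mul_const,
    integral_const_mul, setIntegral_const, smul_eq_mul] at hsum
  · linarith
  all_goals fun_prop

end Chebyshev

theorem MonotoneOn.sub_mul_setIntegral_Icc_mul_le_of_antitoneOn {g k : ℝ → ℝ} {c d : ℝ}
    (hcd : c ≤ d) (hg : MonotoneOn g (Icc c d)) (hk : AntitoneOn k (Icc c d)) :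
    (d - c) * ∫ x in Icc c d, g x * k x ≤
      (∫ x in Icc c d, g x) * ∫ x in Icc c d, k x := by
  have hgi : IntegrableOn g (Icc c d) := hg.integrableOn_isCompact isCompact_Icc
  have hki : IntegrableOn k (Icc c d) := hk.integrableOn_isCompact isCompact_Icc
  have hgki : IntegrableOn (fun x => g x * k x) (Icc c d) :=
    hki.bdd_mul hgi.aestronglyMeasurable
      (ae_restrict_of_forall_mem measurableSet_Icc fun x hx =>
        abs_le_max_abs_abs (hg.mapsTo_Icc hx).1 (hg.mapsTo_Icc hx).2)
  rw [← Real.volume_real_Icc_of_le hcd]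
  exact (hg.antivaryOn hk).measureReal_mul_setIntegral_mul_le measurableSet_Icc
    measure_Icc_lt_top.ne hgi hki hgki

theorem antitoneOn_sq_const_sub_comp_sub {f : ℝ → ℝ} {c τ : ℝ}
    (hfm : MonotoneOn f (Icc 0 1)) (hfc : ∀ y ∈ Icc (0:ℝ) 1, f y ≤ c) :
    AntitoneOn (fun x => (c - f (x - τ)) ^ 2) (Icc τ (τ + 1)) := by
  intro x hx y hy hxy
  have hx' : x - τ ∈ Icc (0:ℝ) 1 := ⟨by linarith [hx.1], by linarith [hx.2]⟩
  have hy' : y - τ ∈ Icc (0:ℝ) 1 := ⟨by linarith [hy.1], by linarith [hy.2]⟩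
  exact pow_le_pow_left₀ (sub_nonneg.2 (hfc _ hy'))
    (sub_le_sub_left (hfm hx' hy' (by linarith)) c) 2

theorem setIntegral_Icc_sq_sub_comp_sub_le {f : ℝ → ℝ} {a τ : ℝ} (ha0 : 0 ≤ a) (hτ0 : 0 ≤ τ)
    (hτa : τ + a ≤ 1) (hf0 : ∀ y ∈ Icc 0 a, 0 ≤ f y) (hfm : MonotoneOn f (Icc 0 a))
    (hconst : ∀ y ∈ Icc a 1, f y = f a) :
    ∫ x in Icc τ 1, (f a - f (x - τ)) ^ 2 ≤ a * f a ^ 2 := by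
  have hvanish : ∀ x ∈ Icc τ 1 \ Icc τ (τ + a), (f a - f (x - τ)) ^ 2 = 0 := by
    rintro x ⟨hx, hxa⟩
    have hlt : τ + a < x := lt_of_not_ge fun hle => hxa ⟨hx.1, hle⟩
    rw [hconst (x - τ) ⟨by linarith, by linarith [hx.2]⟩, sub_self, sq, zero_mul]
  have hbound : ∀ x ∈ Icc τ (τ + a), ‖(f a - f (x - τ)) ^ 2‖ ≤ f a ^ 2 := by
    intro x hx
    have hx' : x - τ ∈ Icc 0 a := ⟨by linarith [hx.1], by linarith [hx.2]⟩
    have h0 := hf0 _ hx'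
    have hle := hfm hx' ⟨ha0, le_rfl⟩ hx'.2
    rw [Real.norm_of_nonneg (sq_nonneg _)]
    nlinarith
  rw [setIntegral_eq_of_subset_of_forall_sdiff_eq_zero measurableSet_Icc
    (Icc_subset_Icc_right hτa) hvanish]
  calc ∫ x in Icc τ (τ + a), (f a - f (x - τ)) ^ 2
      ≤ ‖∫ x in Icc τ (τ + a), (f a - f (x - τ)) ^ 2‖ := Real.le_norm_self _
    _ ≤ f a ^ 2 * volume.real (Icc τ (τ + a)) :=
        norm_setIntegral_le_of_norm_le_const measure_Icc_lt_top hbound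
    _ = a * f a ^ 2 := by
        rw [Real.volume_real_Icc_of_le (by linarith), add_sub_cancel_left, mul_comm]

theorem sq_mul_setIntegral_Icc_le {h f : ℝ → ℝ} {c τ : ℝ} (hτ0 : 0 ≤ τ)
    (hh0 : ∀ x ∈ Icc (0:ℝ) 1, 0 ≤ h x) (hf0 : ∀ x ∈ Icc (0:ℝ) 1, 0 ≤ f x)
    (hhm : MonotoneOn h (Icc 0 1)) (hfm : MonotoneOn f (Icc 0 1))
    (hc : ∀ x ∈ Icc τ 1, f x = c) :
    c ^ 2 * ∫ x in Icc τ 1, h x ≤ ∫ x in Icc 0 1, h x * f x ^ 2 := by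
  have hmono : MonotoneOn (fun x => h x * f x ^ 2) (Icc 0 1) := fun x hx y hy hxy =>
    mul_le_mul (hhm hx hy hxy) (pow_le_pow_left₀ (hf0 x hx) (hfm hx hy hxy) 2)
      (pow_nonneg (hf0 x hx) 2) (hh0 y hy)
  rw [← integral_const_mul, setIntegral_congr_fun measurableSet_Icc fun x hx => by
    rw [← hc x hx, mul_comm]]
  exact setIntegral_mono_set (hmono.integrableOn_isCompact isCompact_Icc)
    (ae_restrict_of_forall_mem measurableSet_Icc fun x hx =>
      mul_nonneg (hh0 x hx) (sq_nonneg _))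
    (Icc_subset_Icc_left hτ0).eventuallyLE

theorem shift_bound_a_le_tau_general (a τ : ℝ) (ha : a ∈ Set.Icc (0:ℝ) 1)
    (haτ : a ≤ τ) (hτhalf : τ ≤ 1 / 2) (h f : ℝ → ℝ)
    (hh0 : ∀ x ∈ Set.Icc (0:ℝ) 1, 0 ≤ h x) (hf0 : ∀ x ∈ Set.Icc (0:ℝ) 1, 0 ≤ f x)
    (hhm : MonotoneOn h (Set.Icc (0:ℝ) 1)) (hfm : MonotoneOn f (Set.Icc (0:ℝ) 1))
    (hconst : ∀ x ∈ Set.Icc a 1, f x = f a) :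
    ∫ x in Set.Icc τ 1, h x * (f x - f (x - τ)) ^ 2 ≤
      2 * a * ∫ x in Set.Icc (0:ℝ) 1, h x * f x ^ 2 := by
  obtain ⟨ha0, ha1⟩ := ha
  have hτ0 : 0 ≤ τ := ha0.trans haτ
  have hconstτ : ∀ x ∈ Icc τ 1, f x = f a := fun x hx => hconst x ⟨haτ.trans hx.1, hx.2⟩
  have hfa : ∀ y ∈ Icc (0:ℝ) 1, f y ≤ f a := fun y hy =>
    (hfm hy ⟨zero_le_one, le_rfl⟩ hy.2).trans (hconst 1 ⟨ha1, le_rfl⟩).le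
  have hk : AntitoneOn (fun x => (f a - f (x - τ)) ^ 2) (Icc τ 1) :=
    (antitoneOn_sq_const_sub_comp_sub hfm hfa).mono (Icc_subset_Icc_right (by linarith))
  have hcheb := (hhm.mono (Icc_subset_Icc_left hτ0)).sub_mul_setIntegral_Icc_mul_le_of_antitoneOn
    (by linarith) hk
  have hkint := setIntegral_Icc_sq_sub_comp_sub_le ha0 hτ0 (by linarith)
    (fun y hy => hf0 y ⟨hy.1, hy.2.trans ha1⟩) (hfm.mono (Icc_subset_Icc_right ha1)) hconst
  have hhf := sq_mul_setIntegral_Icc_le hτ0 hh0 hf0 hhm hfm hconstτ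
  have hH0 : 0 ≤ ∫ x in Icc τ 1, h x :=
    setIntegral_nonneg measurableSet_Icc fun x hx => hh0 x ⟨hτ0.trans hx.1, hx.2⟩
  rw [setIntegral_congr_fun measurableSet_Icc fun x hx => by rw [hconstτ x hx]]
  have hX0 : 0 ≤ ∫ x in Icc τ 1, h x * (f a - f (x - τ)) ^ 2 :=
    setIntegral_nonneg measurableSet_Icc fun x hx =>
      mul_nonneg (hh0 x ⟨hτ0.trans hx.1, hx.2⟩) (sq_nonneg _)
  nlinarith [mul_le_mul_of_nonneg_left hkint hH0, mul_le_mul_of_nonneg_left hhf ha0,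
    mul_le_mul_of_nonneg_right hτhalf hX0]

/-- Lemma (uniform variable shift bound, case `a ≤ τ ≤ 1/2`): for `h, f` nonnegative and
non-decreasing on `[0,1]` with `f` constant on `[a,1]`,
`∫_τ^1 h(x)(f(x)-f(x-τ))² dx ≤ 2a ∫_0^1 h(x) f(x)² dx`. -/
theorem shift_bound_a_le_tau (a τ : ℝ) (ha : a ∈ Set.Icc (0:ℝ) 1) (hτ : τ ∈ Set.Icc (0:ℝ) 1)
    (haτ : a ≤ τ) (hτhalf : τ ≤ 1 / 2) (h f : ℝ → ℝ)
    (hh0 : ∀ x ∈ Set.Icc (0:ℝ) 1, 0 ≤ h x) (hf0 : ∀ x ∈ Set.Icc (0:ℝ) 1, 0 ≤ f x)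
    (hhm : MonotoneOn h (Set.Icc (0:ℝ) 1)) (hfm : MonotoneOn f (Set.Icc (0:ℝ) 1))
    (hconst : ∀ x ∈ Set.Icc a 1, f x = f a) :
    ∫ x in Set.Icc τ 1, h x * (f x - f (x - τ)) ^ 2 ≤
      2 * a * ∫ x in Set.Icc (0:ℝ) 1, h x * f x ^ 2 :=
  shift_bound_a_le_tau_general a τ ha haτ hτhalf h f hh0 hf0 hhm hfm hconst
end

section
/- Let a, \tau \in [0,1] with \tau \le a \le 1/2. Suppose h and f are nonnegative, non-decreasing functions on [0,1], and f is constant on [a,1]. Then \int_\tau^1 h(x)(f(x)-f(x-\tau))^2 dx \le 2\tau \int_0^1 h(x) f(x)^2 dx. -/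
open MeasureTheory Set

/-- Auxiliary version with globally monotone, globally nonnegative functions. -/
lemma shift_bound_aux (a τ : ℝ) (ha0 : 0 ≤ a) (hτ0 : 0 ≤ τ)
    (hτa : τ ≤ a) (hahalf : a ≤ 1 / 2) (h f : ℝ → ℝ)
    (hh0 : ∀ x, 0 ≤ h x) (hf0 : ∀ x, 0 ≤ f x)
    (hhm : Monotone h) (hfm : Monotone f)
    (hconst : ∀ x ∈ Set.Icc a 1, f x = f a) :
    ∫ x in τ..1, h x * (f x - f (x - τ)) ^ 2 ≤
      2 * τ * ∫ x in (0:ℝ)..1, h x * f x ^ 2 := by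
  have ha1 : a ≤ 1 := by linarith
  set b : ℝ := a + τ with hb
  clear_value b
  have hb1 : b ≤ 1 := by simp only [hb]; linarith
  have hab : a ≤ b := by simp only [hb]; linarith
  have hτb : τ ≤ b := by simp only [hb]; linarith
  have hτ1 : τ ≤ 1 := by linarith
  -- the three monotone auxiliary functions
  set g : ℝ → ℝ := fun x => h x * f x ^ 2 with hg
  clear_value g
  have hgapp : ∀ x, g x = h x * f x ^ 2 := fun x => by rw [hg]
  have hgm : Monotone g := by
    intro x y hxy
    rw [hgapp, hgapp]
    exact mul_le_mul (hhm hxy) (pow_le_pow_left₀ (hf0 x) (hfm hxy) 2)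
      (pow_nonneg (hf0 x) 2) (hh0 y)
  have hg0 : ∀ x, 0 ≤ g x := fun x => by
    rw [hgapp]; exact mul_nonneg (hh0 x) (pow_nonneg (hf0 x) 2)
  set ψ : ℝ → ℝ := fun y => h (y + τ) * f y ^ 2 with hψ
  clear_value ψ
  have hψapp : ∀ x, ψ x = h (x + τ) * f x ^ 2 := fun x => by rw [hψ]
  have hψm : Monotone ψ := by
    intro x y hxy
    rw [hψapp, hψapp]
    exact mul_le_mul (hhm (by linarith)) (pow_le_pow_left₀ (hf0 x) (hfm hxy) 2)
      (pow_nonneg (hf0 x) 2) (hh0 (y + τ))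
  have hψsub : ∀ x, ψ (x - τ) = h x * f (x - τ) ^ 2 := by
    intro x; rw [hψapp]; ring_nf
  set φ : ℝ → ℝ := fun x => h x * (f x - f (x - τ)) ^ 2 with hφ
  clear_value φ
  have hφapp : ∀ x, φ x = h x * (f x - f (x - τ)) ^ 2 := fun x => by rw [hφ]
  -- pointwise bounds for φ
  have hφ0 : ∀ x, 0 ≤ φ x := fun x => by
    rw [hφapp]; exact mul_nonneg (hh0 x) (sq_nonneg _)
  have hφg : ∀ x, φ x ≤ g x := by
    intro x
    rw [hφapp, hgapp]
    have h1 : f (x - τ) ≤ f x := hfm (by linarith)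
    have h2 : 0 ≤ f (x - τ) := hf0 _
    have : (f x - f (x - τ)) ^ 2 ≤ f x ^ 2 := by nlinarith
    exact mul_le_mul_of_nonneg_left this (hh0 x)
  -- integrability
  have hgint : ∀ u v : ℝ, IntervalIntegrable g volume u v :=
    fun u v => hgm.intervalIntegrable
  have hhint : ∀ u v : ℝ, IntervalIntegrable h volume u v :=
    fun u v => hhm.intervalIntegrable
  have hψsubm : Monotone (fun x => ψ (x - τ)) := fun x y hxy => hψm (by linarith)
  have hψsubint : ∀ u v : ℝ, IntervalIntegrable (fun x => ψ (x - τ)) volume u v :=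
    fun u v => hψsubm.intervalIntegrable
  have hφint : ∀ u v : ℝ, IntervalIntegrable φ volume u v := by
    intro u v
    have hmg : Monotone (fun x => g x - ψ (x - τ) + ψ (x - τ)) := by
      simpa using hgm
    have : IntervalIntegrable (fun x => g x - ψ (x - τ)) volume u v :=
      (hgint u v).sub (hψsubint u v)
    -- φ is measurable since h and f are monotone hence measurable
    have hmeas : Measurable φ := by
      rw [hφ]
      have hmh : Measurable h := hhm.measurable
      have hmf : Measurable f := hfm.measurable
      have hshift : Measurable (fun x : ℝ => f (x - τ)) :=
        hmf.comp (measurable_id.sub measurable_const)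
      exact hmh.mul ((hmf.sub hshift).pow measurable_const)
    apply (hgint u v).mono_fun hmeas.aestronglyMeasurable
    filter_upwards with x
    rw [Real.norm_eq_abs, Real.norm_eq_abs, abs_of_nonneg (hφ0 x),
      abs_of_nonneg (hg0 x)]
    exact hφg x
  -- Step 1: the integrand vanishes on [b, 1]
  have hzero : (∫ x in b..1, φ x) = 0 := by
    rw [← intervalIntegral.integral_zero (a := b) (b := (1:ℝ)) (μ := volume)]
    apply intervalIntegral.integral_congr
    intro x hx
    rw [Set.uIcc_of_le hb1] at hx
    have hx1 : f x = f a := hconst x ⟨by linarith [hx.1], hx.2⟩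
    have hx2 : f (x - τ) = f a := hconst (x - τ) ⟨by linarith [hx.1], by linarith [hx.2]⟩
    rw [hφapp, hx1, hx2]
    simp
  have hsplit : (∫ x in τ..1, φ x) = ∫ x in τ..b, φ x := by
    rw [← intervalIntegral.integral_add_adjacent_intervals (hφint τ b) (hφint b 1), hzero,
      add_zero]
  -- Step 2: pointwise bound on [τ, b]
  have hstep2 : (∫ x in τ..b, φ x) ≤ ∫ x in τ..b, (g x - ψ (x - τ)) := by
    apply intervalIntegral.integral_mono_on hτb (hφint τ b)
      ((hgint τ b).sub (hψsubint τ b))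
    intro x _
    have h1 : f (x - τ) ≤ f x := hfm (by linarith)
    have h2 : 0 ≤ f (x - τ) := hf0 _
    have key : (f x - f (x - τ)) ^ 2 ≤ f x ^ 2 - f (x - τ) ^ 2 := by nlinarith
    have := mul_le_mul_of_nonneg_left key (hh0 x)
    rw [hψsub x, hφapp, hgapp]
    nlinarith [this]
  -- Step 3: change of variables and monotonicity of h
  have hcv : (∫ x in τ..b, ψ (x - τ)) = ∫ y in (0:ℝ)..a, ψ y := by
    rw [intervalIntegral.integral_comp_sub_right ψ τ]
    norm_num [hb]
  have hstep3 : (∫ y in (0:ℝ)..a, g y) ≤ ∫ y in (0:ℝ)..a, ψ y := by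
    apply intervalIntegral.integral_mono_on ha0 (hgint 0 a) (hψm.intervalIntegrable)
    intro y _
    rw [hgapp, hψapp]
    exact mul_le_mul_of_nonneg_right (hhm (by linarith : y ≤ y + τ))
      (pow_nonneg (hf0 y) 2)
  -- Step 4: telescoping
  have hsub : (∫ x in τ..b, (g x - ψ (x - τ))) =
      (∫ x in τ..b, g x) - ∫ x in τ..b, ψ (x - τ) :=
    intervalIntegral.integral_sub (hgint τ b) (hψsubint τ b)
  have htel1 : (∫ x in (0:ℝ)..τ, g x) + ∫ x in τ..b, g x = ∫ x in (0:ℝ)..b, g x :=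
    intervalIntegral.integral_add_adjacent_intervals (hgint 0 τ) (hgint τ b)
  have htel2 : (∫ x in (0:ℝ)..a, g x) + ∫ x in a..b, g x = ∫ x in (0:ℝ)..b, g x :=
    intervalIntegral.integral_add_adjacent_intervals (hgint 0 a) (hgint a b)
  have h0τ : 0 ≤ ∫ x in (0:ℝ)..τ, g x :=
    intervalIntegral.integral_nonneg hτ0 (fun x _ => hg0 x)
  -- Step 5: evaluate ∫_a^b g via constancy of f
  have hconst2 : ∀ u v : ℝ, a ≤ u → u ≤ v → v ≤ 1 →
      (∫ x in u..v, g x) = f a ^ 2 * ∫ x in u..v, h x := by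
    intro u v hau huv hv1
    rw [← intervalIntegral.integral_const_mul]
    apply intervalIntegral.integral_congr
    intro x hx
    rw [Set.uIcc_of_le huv] at hx
    have : f x = f a := hconst x ⟨le_trans hau hx.1, le_trans hx.2 hv1⟩
    rw [hgapp, this]; ring
  -- Step 6: the key elementary inequality ∫_a^b h ≤ 2τ ∫_a^1 h
  have hkey : (∫ x in a..b, h x) ≤ 2 * τ * ∫ x in a..1, h x := by
    have hAB : (∫ x in a..b, h x) + ∫ x in b..1, h x = ∫ x in a..1, h x :=
      intervalIntegral.integral_add_adjacent_intervals (hhint a b) (hhint b 1)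
    have hA0 : 0 ≤ ∫ x in a..b, h x :=
      intervalIntegral.integral_nonneg hab (fun x _ => hh0 x)
    have hB0 : 0 ≤ ∫ x in b..1, h x :=
      intervalIntegral.integral_nonneg hb1 (fun x _ => hh0 x)
    have hM0 : 0 ≤ h b := hh0 b
    have hAM : (∫ x in a..b, h x) ≤ τ * h b := by
      have h1 : (∫ x in a..b, h x) ≤ ∫ _x in a..b, h b := by
        apply intervalIntegral.integral_mono_on hab (hhint a b) intervalIntegrable_const
        intro x hx; exact hhm hx.2
      have h2 : (∫ _x in a..b, h b) = τ * h b := by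
        rw [intervalIntegral.integral_const, smul_eq_mul, hb]; ring_nf
      linarith
    have hBM : (1 - b) * h b ≤ ∫ x in b..1, h x := by
      have h1 : (∫ _x in b..1, h b) ≤ ∫ x in b..1, h x := by
        apply intervalIntegral.integral_mono_on hb1 intervalIntegrable_const (hhint b 1)
        intro x hx; exact hhm hx.1
      have h2 : (∫ _x in b..1, h b) = (1 - b) * h b := by
        rw [intervalIntegral.integral_const, smul_eq_mul]
      linarith
    rw [← hAB]
    revert hAB hA0 hB0 hAM hBM
    generalize (∫ x in a..b, h x) = A
    generalize (∫ x in b..1, h x) = B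
    intro hAB hA0 hB0 hAM hBM
    have hbval : b = a + τ := hb
    rcases le_or_gt (2 * τ) 1 with hcase | hcase
    · have h1 : A * (1 - 2 * τ) ≤ τ * h b * (1 - 2 * τ) :=
        mul_le_mul_of_nonneg_right hAM (by linarith)
      have h2 : 2 * τ * ((1 - b) * h b) ≤ 2 * τ * B :=
        mul_le_mul_of_nonneg_left hBM (by linarith)
      have h3 : τ * h b * (1 - 2 * τ) ≤ 2 * τ * ((1 - b) * h b) := by
        have h4 : 0 ≤ τ * h b * (1 - 2 * a) :=
          mul_nonneg (mul_nonneg hτ0 hM0) (by linarith)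
        have h5 : 2 * τ * ((1 - b) * h b) = 2 * τ * ((1 - a - τ) * h b) := by
          rw [hbval]; ring
        rw [h5]; linarith [h4]
      linarith [h1, h2, h3]
    · linarith [mul_nonneg hτ0 hB0, mul_nonneg (by linarith : (0:ℝ) ≤ 2 * τ - 1) hA0]
  -- Step 7: lower bound for the RHS integral
  have hRHS : f a ^ 2 * (∫ x in a..1, h x) ≤ ∫ x in (0:ℝ)..1, g x := by
    have htel3 : (∫ x in (0:ℝ)..a, g x) + ∫ x in a..1, g x = ∫ x in (0:ℝ)..1, g x :=
      intervalIntegral.integral_add_adjacent_intervals (hgint 0 a) (hgint a 1)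
    have h0a : 0 ≤ ∫ x in (0:ℝ)..a, g x :=
      intervalIntegral.integral_nonneg ha0 (fun x _ => hg0 x)
    rw [← hconst2 a 1 le_rfl ha1 le_rfl]
    linarith
  -- put everything together
  have hfa2 : 0 ≤ f a ^ 2 := sq_nonneg _
  have main : (∫ x in τ..1, φ x) ≤ f a ^ 2 * ∫ x in a..b, h x := by
    rw [hsplit, ← hconst2 a b le_rfl hab hb1]
    calc (∫ x in τ..b, φ x) ≤ (∫ x in τ..b, g x) - ∫ x in τ..b, ψ (x - τ) := by
          rw [← hsub]; exact hstep2
      _ ≤ (∫ x in τ..b, g x) - ∫ y in (0:ℝ)..a, g y := by rw [hcv]; linarith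
      _ ≤ ∫ x in a..b, g x := by linarith
  calc (∫ x in τ..1, φ x) ≤ f a ^ 2 * ∫ x in a..b, h x := main
    _ ≤ f a ^ 2 * (2 * τ * ∫ x in a..1, h x) := mul_le_mul_of_nonneg_left hkey hfa2
    _ = 2 * τ * (f a ^ 2 * ∫ x in a..1, h x) := by ring
    _ ≤ 2 * τ * ∫ x in (0:ℝ)..1, g x :=
        mul_le_mul_of_nonneg_left hRHS (by linarith)

/-- Lemma (uniform variable shift bound, case `τ ≤ a ≤ 1/2`): for `h, f` nonnegative and
non-decreasing on `[0,1]` with `f` constant on `[a,1]`,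
`∫_τ^1 h(x)(f(x)-f(x-τ))² dx ≤ 2τ ∫_0^1 h(x) f(x)² dx`. -/
theorem shift_bound_tau_le_a (a τ : ℝ) (ha : a ∈ Set.Icc (0:ℝ) 1) (hτ : τ ∈ Set.Icc (0:ℝ) 1)
    (hτa : τ ≤ a) (hahalf : a ≤ 1 / 2) (h f : ℝ → ℝ)
    (hh0 : ∀ x ∈ Set.Icc (0:ℝ) 1, 0 ≤ h x) (hf0 : ∀ x ∈ Set.Icc (0:ℝ) 1, 0 ≤ f x)
    (hhm : MonotoneOn h (Set.Icc (0:ℝ) 1)) (hfm : MonotoneOn f (Set.Icc (0:ℝ) 1))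
    (hconst : ∀ x ∈ Set.Icc a 1, f x = f a) :
    ∫ x in Set.Icc τ 1, h x * (f x - f (x - τ)) ^ 2 ≤
      2 * τ * ∫ x in Set.Icc (0:ℝ) 1, h x * f x ^ 2 := by
  obtain ⟨ha0, ha1⟩ := ha
  obtain ⟨hτ0, hτ1⟩ := hτ
  -- clamp to [0,1]
  set c : ℝ → ℝ := fun x => max 0 (min 1 x) with hc
  have hcmem : ∀ x, c x ∈ Set.Icc (0:ℝ) 1 := by
    intro x
    exact ⟨le_max_left _ _, max_le zero_le_one (min_le_left _ _)⟩
  have hcmono : Monotone c := fun x y hxy =>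
    max_le_max le_rfl (min_le_min le_rfl hxy)
  have hcid : ∀ x ∈ Set.Icc (0:ℝ) 1, c x = x := by
    intro x hx
    simp [hc, min_eq_right hx.2, max_eq_right hx.1]
  set h' : ℝ → ℝ := fun x => h (c x) with hh'
  set f' : ℝ → ℝ := fun x => f (c x) with hf'
  have hh'0 : ∀ x, 0 ≤ h' x := fun x => hh0 _ (hcmem x)
  have hf'0 : ∀ x, 0 ≤ f' x := fun x => hf0 _ (hcmem x)
  have hh'm : Monotone h' := fun x y hxy => hhm (hcmem x) (hcmem y) (hcmono hxy)
  have hf'm : Monotone f' := fun x y hxy => hfm (hcmem x) (hcmem y) (hcmono hxy)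
  have hca : c a = a := hcid a ⟨ha0, ha1⟩
  have hconst' : ∀ x ∈ Set.Icc a 1, f' x = f' a := by
    intro x hx
    have hx01 : x ∈ Set.Icc (0:ℝ) 1 := ⟨le_trans ha0 hx.1, hx.2⟩
    simp only [hf', hcid x hx01, hca]
    exact hconst x hx
  have haux := shift_bound_aux a τ ha0 hτ0 hτa hahalf h' f' hh'0 hf'0 hh'm hf'm hconst'
  -- identify the integrals
  have heq1 : (∫ x in Set.Icc τ 1, h x * (f x - f (x - τ)) ^ 2) =
      ∫ x in τ..1, h' x * (f' x - f' (x - τ)) ^ 2 := by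
    rw [intervalIntegral.integral_of_le (by linarith), ← integral_Icc_eq_integral_Ioc]
    apply setIntegral_congr_fun measurableSet_Icc
    intro x hx
    have hx01 : x ∈ Set.Icc (0:ℝ) 1 := ⟨le_trans hτ0 hx.1, hx.2⟩
    have hxτ : x - τ ∈ Set.Icc (0:ℝ) 1 := ⟨by linarith [hx.1], by linarith [hx.2]⟩
    simp only [hh', hf', hcid x hx01, hcid (x - τ) hxτ]
  have heq2 : (∫ x in Set.Icc (0:ℝ) 1, h x * f x ^ 2) =
      ∫ x in (0:ℝ)..1, h' x * f' x ^ 2 := by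
    rw [intervalIntegral.integral_of_le zero_le_one, ← integral_Icc_eq_integral_Ioc]
    apply setIntegral_congr_fun measurableSet_Icc
    intro x hx
    simp only [hh', hf', hcid x hx]
  rw [heq1, heq2]
  exact haux
end

section
/- For a nonnegative integrable random variable X with E[X \log X] finite, define Ent(X) = E[X \log X] - E[X] \log E[X]. Then Ent(X) = \sup \{ E[XY] : Y \text{ random variable with } E[e^Y] \le 1 \}. -/
open MeasureTheory ProbabilityTheory Real

/-- Scaled Young inequality: for `x ≥ 0`, `m > 0`, `t ∈ ℝ`,
`x t ≤ x log x - x log m - x + m e^t`. -/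
lemma young_scaled {m : ℝ} (hm : 0 < m) {x : ℝ} (hx : 0 ≤ x) (t : ℝ) :
    x * t ≤ x * Real.log x - x * Real.log m - x + m * Real.exp t := by
  rcases hx.eq_or_lt with h | h
  · rw [← h]
    simp only [zero_mul, sub_zero, zero_add, sub_self]
    positivity
  · have key : t - Real.log x + Real.log m + 1 ≤
        Real.exp (t - Real.log x + Real.log m) := Real.add_one_le_exp _
    have hexp : x * Real.exp (t - Real.log x + Real.log m) = m * Real.exp t := by
      rw [Real.exp_add, Real.exp_sub, Real.exp_log h, Real.exp_log hm]
      field_simp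
    have h2 := mul_le_mul_of_nonneg_left key h.le
    rw [hexp] at h2
    nlinarith [h2]

set_option maxHeartbeats 1000000 in
/-- Variational characterization of entropy:
`Ent(X) = sup { E[XY] : E[e^Y] ≤ 1 }` for a nonnegative integrable `X` with
`E[X log X]` finite. -/
theorem entropy_variational
    {Ω : Type*} [MeasureSpace Ω] [IsProbabilityMeasure (ℙ : Measure Ω)]
    (X : Ω → ℝ) (hX0 : ∀ ω, 0 ≤ X ω) (hXint : Integrable X ℙ)
    (hXlog : Integrable (fun ω => X ω * Real.log (X ω)) ℙ) :
    (∫ ω, X ω * Real.log (X ω)) - (∫ ω, X ω) * Real.log (∫ ω, X ω) =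
      sSup {r : ℝ | ∃ Y : Ω → ℝ, Integrable (fun ω => Real.exp (Y ω)) ℙ ∧
        (∫ ω, Real.exp (Y ω)) ≤ 1 ∧ Integrable (fun ω => X ω * Y ω) ℙ ∧
        r = ∫ ω, X ω * Y ω} := by
  set S : Set ℝ := {r : ℝ | ∃ Y : Ω → ℝ, Integrable (fun ω => Real.exp (Y ω)) ℙ ∧
        (∫ ω, Real.exp (Y ω)) ≤ 1 ∧ Integrable (fun ω => X ω * Y ω) ℙ ∧
        r = ∫ ω, X ω * Y ω} with hS
  set m : ℝ := ∫ ω, X ω with hmdef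
  have hm0 : 0 ≤ m := integral_nonneg hX0
  have h0S : (0 : ℝ) ∈ S := by
    refine ⟨fun _ => 0, ?_, ?_, ?_, ?_⟩
    · simpa using (integrable_const (1 : ℝ))
    · simp
    · simpa using (integrable_const (0 : ℝ))
    · simp
  rcases hm0.eq_or_lt with hm | hm
  · -- degenerate case : m = 0, so X = 0 a.e.
    have hXae : X =ᵐ[ℙ] 0 := by
      have := (integral_eq_zero_iff_of_nonneg hX0 hXint).mp hm.symm
      exact this
    have hSsub : ∀ r ∈ S, r = 0 := by
      rintro r ⟨Y, _, _, _, hr⟩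
      have : (fun ω => X ω * Y ω) =ᵐ[ℙ] 0 := by
        filter_upwards [hXae] with ω hω
        simp [hω]
      rw [hr, integral_eq_zero_of_ae this]
    have hSeq : S = {0} := by
      apply Set.eq_singleton_iff_unique_mem.mpr
      exact ⟨h0S, hSsub⟩
    have hXlog0 : (fun ω => X ω * Real.log (X ω)) =ᵐ[ℙ] 0 := by
      filter_upwards [hXae] with ω hω
      simp [hω]
    rw [hSeq, csSup_singleton, integral_eq_zero_of_ae hXlog0, ← hm]
    simp
  · -- main case : m > 0
    have hub : ∀ r ∈ S, r ≤ (∫ ω, X ω * Real.log (X ω)) - m * Real.log m := by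
      rintro r ⟨Y, hYint, hY1, hXYint, hr⟩
      have hineq : ∀ ω, X ω * Y ω ≤
          X ω * Real.log (X ω) - X ω * Real.log m - X ω + m * Real.exp (Y ω) :=
        fun ω => young_scaled hm (hX0 ω) (Y ω)
      have hI0 : Integrable (fun ω => X ω * Real.log m) ℙ := hXint.mul_const _
      have hI1 : Integrable (fun ω => X ω * Real.log (X ω) - X ω * Real.log m) ℙ :=
        hXlog.sub hI0
      have hI2 : Integrable
          (fun ω => X ω * Real.log (X ω) - X ω * Real.log m - X ω) ℙ := hI1.sub hXint
      have hI3 : Integrable (fun ω => m * Real.exp (Y ω)) ℙ := hYint.const_mul m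
      have hRint : Integrable (fun ω =>
          X ω * Real.log (X ω) - X ω * Real.log m - X ω + m * Real.exp (Y ω)) ℙ :=
        hI2.add hI3
      have h1 : (∫ ω, X ω * Y ω) ≤ ∫ ω,
          (X ω * Real.log (X ω) - X ω * Real.log m - X ω + m * Real.exp (Y ω)) :=
        integral_mono hXYint hRint hineq
      have h2 : (∫ ω, (X ω * Real.log (X ω) - X ω * Real.log m - X ω
            + m * Real.exp (Y ω)))
          = (∫ ω, X ω * Real.log (X ω)) - m * Real.log m - m
            + m * ∫ ω, Real.exp (Y ω) := by
        rw [integral_add hI2 hI3, integral_sub hI1 hXint,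
          integral_sub hXlog hI0, MeasureTheory.integral_mul_const,
          MeasureTheory.integral_const_mul, ← hmdef]
      have h3 : m * (∫ ω, Real.exp (Y ω)) ≤ m * 1 :=
        mul_le_mul_of_nonneg_left hY1 hm.le
      rw [hr]
      rw [h2] at h1
      linarith
    have hbdd : BddAbove S := ⟨_, hub⟩
    have hmem : ∀ δ : ℝ, 0 < δ →
        (∫ ω, X ω * Real.log (X ω)) - m * Real.log m - δ * m ∈ S := by
      intro δ hδ
      have hδ1 : Real.exp (-δ) < 1 := Real.exp_lt_one_iff.mpr (by linarith)
      have hδpos : 0 < 1 - Real.exp (-δ) := by linarith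
      set Y : Ω → ℝ := fun ω => if X ω = 0 then Real.log (1 - Real.exp (-δ))
        else Real.log (X ω) - Real.log m - δ with hYdef
      have hexpY : ∀ ω, Real.exp (Y ω) =
          if X ω = 0 then 1 - Real.exp (-δ) else Real.exp (-δ) / m * X ω := by
        intro ω
        simp only [hYdef]
        split_ifs with h
        · exact Real.exp_log hδpos
        · have hXpos : 0 < X ω := lt_of_le_of_ne (hX0 ω) (Ne.symm h)
          rw [show Real.log (X ω) - Real.log m - δ
              = -δ + (Real.log (X ω) - Real.log m) by ring,
            Real.exp_add, Real.exp_sub, Real.exp_log hXpos, Real.exp_log hm]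
          ring
      have hmeas : AEStronglyMeasurable (fun ω => Real.exp (Y ω)) ℙ := by
        have hg : Measurable (fun x : ℝ => if x = 0 then 1 - Real.exp (-δ)
            else Real.exp (-δ) / m * x) :=
          Measurable.ite (measurableSet_eq) measurable_const
            (measurable_id.const_mul _)
        have : (fun ω => Real.exp (Y ω)) = (fun x : ℝ => if x = 0 then
            1 - Real.exp (-δ) else Real.exp (-δ) / m * x) ∘ X := by
          funext ω
          simp only [Function.comp_apply]
          exact hexpY ω
        rw [this]
        exact (hg.comp_aemeasurable hXint.aemeasurable).aestronglyMeasurable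
      have hboundint : Integrable
          (fun ω => (1 - Real.exp (-δ)) + Real.exp (-δ) / m * X ω) ℙ :=
        (integrable_const _).add (hXint.const_mul _)
      have hptbound : ∀ ω, Real.exp (Y ω) ≤
          (1 - Real.exp (-δ)) + Real.exp (-δ) / m * X ω := by
        intro ω
        rw [hexpY ω]
        split_ifs with h
        · have : 0 ≤ Real.exp (-δ) / m * X ω := by positivity
          linarith
        · linarith [hδpos.le]
      have hYexpint : Integrable (fun ω => Real.exp (Y ω)) ℙ := by
        refine Integrable.mono' hboundint hmeas ?_
        filter_upwards with ω
        rw [Real.norm_eq_abs, abs_of_pos (Real.exp_pos _)]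
        exact hptbound ω
      have hYexp1 : (∫ ω, Real.exp (Y ω)) ≤ 1 := by
        have h1 : (∫ ω, Real.exp (Y ω)) ≤
            ∫ ω, ((1 - Real.exp (-δ)) + Real.exp (-δ) / m * X ω) :=
          integral_mono hYexpint hboundint hptbound
        have h2 : (∫ ω, ((1 - Real.exp (-δ)) + Real.exp (-δ) / m * X ω))
            = (1 - Real.exp (-δ)) + Real.exp (-δ) / m * m := by
          rw [integral_add (integrable_const _) (hXint.const_mul _),
            integral_const, MeasureTheory.integral_const_mul, ← hmdef]
          simp
        rw [h2, div_mul_cancel₀ _ (ne_of_gt hm)] at h1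
        linarith
      have hXY : (fun ω => X ω * Y ω) =
          fun ω => X ω * Real.log (X ω) - X ω * Real.log m - δ * X ω := by
        funext ω
        simp only [hYdef]
        split_ifs with h
        · simp [h]
        · ring
      have hXYint : Integrable (fun ω => X ω * Y ω) ℙ := by
        rw [hXY]
        exact (hXlog.sub (hXint.mul_const _)).sub (hXint.const_mul _)
      refine ⟨Y, hYexpint, hYexp1, hXYint, ?_⟩
      have hI0 : Integrable (fun ω => X ω * Real.log m) ℙ := hXint.mul_const _
      have hI1 : Integrable (fun ω => X ω * Real.log (X ω) - X ω * Real.log m) ℙ :=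
        hXlog.sub hI0
      have hI4 : Integrable (fun ω => δ * X ω) ℙ := hXint.const_mul _
      rw [hXY, integral_sub hI1 hI4, integral_sub hXlog hI0,
        MeasureTheory.integral_mul_const, MeasureTheory.integral_const_mul, ← hmdef]
    apply le_antisymm
    · refine le_of_forall_pos_le_add fun ε hε => ?_
      have hδ : 0 < ε / m := div_pos hε hm
      have h := le_csSup hbdd (hmem (ε / m) hδ)
      rw [div_mul_cancel₀ _ (ne_of_gt hm)] at h
      linarith
    · exact csSup_le ⟨0, h0S⟩ hub
end

section
/- Let X be a random variable with an independent copy X'. Then for every \lambda \in \mathbb{R}, Ent(e^{\lambda X}) \le E[e^{\lambda X} q(\lambda(X'-X)_+)], where q(x) = x(e^x - 1), provided the expectations are finite. -/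
open MeasureTheory ProbabilityTheory Real

namespace SymLSAux

noncomputable def G (l : ℝ) (p : ℝ × ℝ) : ℝ :=
  Real.exp (l * p.1) * (max (l * p.2 - l * p.1) 0 * (Real.exp (max (l * p.2 - l * p.1) 0) - 1))

noncomputable def F (l : ℝ) (p : ℝ × ℝ) : ℝ :=
  Real.exp (l * p.1) * (l * p.1) - Real.exp (l * p.1) * (l * p.2)
    - Real.exp (l * p.1) + Real.exp (l * p.2)

lemma G_meas (l : ℝ) : Measurable (G l) := by unfold G; fun_prop

lemma F_meas (l : ℝ) : Measurable (F l) := by unfold F; fun_prop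

lemma F_nonneg (l : ℝ) (p : ℝ × ℝ) : 0 ≤ F l p := by
  have h := Real.add_one_le_exp (l * p.2 - l * p.1)
  have e : Real.exp (l * p.2 - l * p.1) * Real.exp (l * p.1) = Real.exp (l * p.2) := by
    rw [← Real.exp_add]; ring_nf
  have hp := Real.exp_pos (l * p.1)
  unfold F
  nlinarith

lemma key (l : ℝ) (p : ℝ × ℝ) : G l p + G l p.swap = F l p + F l p.swap := by
  obtain ⟨a, b⟩ := p
  simp only [G, F, Prod.swap_prod_mk]
  rcases le_total (l * a) (l * b) with h | h
  · rw [max_eq_left (by linarith), max_eq_right (by linarith)]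
    have e : Real.exp (l * b - l * a) * Real.exp (l * a) = Real.exp (l * b) := by
      rw [← Real.exp_add]; ring_nf
    nlinarith [Real.exp_pos (l * a)]
  · rw [max_eq_right (by linarith), max_eq_left (by linarith)]
    have e : Real.exp (l * a - l * b) * Real.exp (l * b) = Real.exp (l * a) := by
      rw [← Real.exp_add]; ring_nf
    nlinarith [Real.exp_pos (l * b)]

lemma aux (ν : Measure ℝ) [IsProbabilityMeasure ν] (l : ℝ)
    (hf : Integrable (fun x => Real.exp (l * x)) ν)
    (hfg : Integrable (fun x => Real.exp (l * x) * (l * x)) ν)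
    (hG : Integrable (G l) (ν.prod ν)) :
    (∫ x, Real.exp (l * x) * (l * x) ∂ν)
      - (∫ x, Real.exp (l * x) ∂ν) * Real.log (∫ x, Real.exp (l * x) ∂ν)
      ≤ ∫ p, G l p ∂(ν.prod ν) := by
  set m := ∫ x, Real.exp (l * x) ∂ν with hm_def
  have hm : 0 < m := integral_exp_pos hf
  have hGswap : Integrable (fun p : ℝ × ℝ => G l p.swap) (ν.prod ν) := hG.swap
  have hΦ : Integrable (fun p : ℝ × ℝ => F l p + F l p.swap) (ν.prod ν) := by
    have h := hG.add hGswap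
    refine h.congr (Filter.Eventually.of_forall fun p => ?_)
    exact key l p
  have hF : Integrable (F l) (ν.prod ν) := by
    refine hΦ.mono' (F_meas l).aestronglyMeasurable
      (Filter.Eventually.of_forall fun p => ?_)
    rw [Real.norm_of_nonneg (F_nonneg l p)]
    linarith [F_nonneg l p.swap]
  -- component integrabilities on the product
  have hA : Integrable (fun p : ℝ × ℝ => Real.exp (l * p.1) * (l * p.1)) (ν.prod ν) := by
    have := Integrable.mul_prod (μ := ν) (ν := ν) hfg (integrable_const (1 : ℝ))
    simpa using this
  have hB1 : Integrable (fun p : ℝ × ℝ => Real.exp (l * p.1)) (ν.prod ν) := by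
    have := Integrable.mul_prod (μ := ν) (ν := ν) hf (integrable_const (1 : ℝ))
    simpa using this
  have hB2 : Integrable (fun p : ℝ × ℝ => Real.exp (l * p.2)) (ν.prod ν) := by
    have := Integrable.mul_prod (μ := ν) (ν := ν) (integrable_const (1 : ℝ)) hf
    simpa using this
  have hC : Integrable (fun p : ℝ × ℝ => Real.exp (l * p.1) * (l * p.2)) (ν.prod ν) := by
    have e : (fun p : ℝ × ℝ => Real.exp (l * p.1) * (l * p.2))
        = fun p => (Real.exp (l * p.1) * (l * p.1) - Real.exp (l * p.1)
          + Real.exp (l * p.2)) - F l p := by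
      funext p; simp only [F]; ring
    rw [e]
    exact ((hA.sub hB1).add hB2).sub hF
  -- integrability of g
  have hmg : Integrable (fun y : ℝ => ∫ x, Real.exp (l * x) * (l * y) ∂ν) ν :=
    hC.integral_prod_right
  have hmg' : Integrable (fun y : ℝ => m * (l * y)) ν := by
    refine hmg.congr (Filter.Eventually.of_forall fun y => ?_)
    show (∫ x, Real.exp (l * x) * (l * y) ∂ν) = m * (l * y)
    rw [integral_mul_const]
  have hg : Integrable (fun y : ℝ => l * y) ν := by
    have h := hmg'.const_mul m⁻¹
    refine h.congr (Filter.Eventually.of_forall fun y => ?_)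
    field_simp
  -- Jensen: ∫ g ≤ log m
  have hJ : ∫ y, l * y ∂ν ≤ Real.log m := by
    have pt : ∀ y : ℝ, (l * y) - Real.log m + 1 ≤ Real.exp (l * y) / m := by
      intro y
      have h := Real.add_one_le_exp ((l * y) - Real.log m)
      rw [Real.exp_sub, Real.exp_log hm] at h
      linarith
    have hint1 : Integrable (fun y : ℝ => (l * y) - Real.log m + 1) ν :=
      (hg.sub (integrable_const _)).add (integrable_const _)
    have hint2 : Integrable (fun y : ℝ => Real.exp (l * y) / m) ν := hf.div_const m
    have h := integral_mono hint1 hint2 pt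
    have hint1s : Integrable (fun y : ℝ => l * y - Real.log m) ν :=
      hg.sub (integrable_const _)
    have lhs_eq : ∫ a, (l * a - Real.log m + 1) ∂ν
        = (∫ y, l * y ∂ν) - Real.log m + 1 := by
      rw [integral_add hint1s (integrable_const 1),
        integral_sub hg (integrable_const _), integral_const, integral_const]
      simp
    have rhs_eq : ∫ a, (Real.exp (l * a) / m) ∂ν = 1 := by
      rw [integral_div, ← hm_def, div_self hm.ne']
    rw [lhs_eq, rhs_eq] at h
    linarith
  -- Fubini computations
  have EA : ∫ p, Real.exp (l * p.1) * (l * p.1) ∂(ν.prod ν)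
      = ∫ x, Real.exp (l * x) * (l * x) ∂ν := by
    have := integral_prod_mul (μ := ν) (ν := ν)
      (fun x => Real.exp (l * x) * (l * x)) (fun _ => (1 : ℝ))
    simpa using this
  have EB1 : ∫ p, Real.exp (l * p.1) ∂(ν.prod ν) = m := by
    have := integral_prod_mul (μ := ν) (ν := ν)
      (fun x => Real.exp (l * x)) (fun _ => (1 : ℝ))
    simpa using this
  have EB2 : ∫ p, Real.exp (l * p.2) ∂(ν.prod ν) = m := by
    have := integral_prod_mul (μ := ν) (ν := ν)
      (fun _ => (1 : ℝ)) (fun x => Real.exp (l * x))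
    simpa using this
  have EC : ∫ p, Real.exp (l * p.1) * (l * p.2) ∂(ν.prod ν) = m * ∫ y, l * y ∂ν :=
    integral_prod_mul (μ := ν) (ν := ν) (fun x => Real.exp (l * x)) (fun y => l * y)
  have EF : ∫ p, F l p ∂(ν.prod ν)
      = (∫ x, Real.exp (l * x) * (l * x) ∂ν) - m * ∫ y, l * y ∂ν := by
    have e : (F l) = fun p : ℝ × ℝ => (Real.exp (l * p.1) * (l * p.1)
        - Real.exp (l * p.1) * (l * p.2) - Real.exp (l * p.1)) + Real.exp (l * p.2) := by
      funext p; simp only [F]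
    have i1 : Integrable (fun p : ℝ × ℝ => Real.exp (l * p.1) * (l * p.1)
        - Real.exp (l * p.1) * (l * p.2)) (ν.prod ν) := hA.sub hC
    have i2 : Integrable (fun p : ℝ × ℝ => Real.exp (l * p.1) * (l * p.1)
        - Real.exp (l * p.1) * (l * p.2) - Real.exp (l * p.1)) (ν.prod ν) := i1.sub hB1
    rw [e, integral_add i2 hB2, integral_sub i1 hB1,
      integral_sub hA hC, EA, EB1, EB2, EC]
    ring
  have EG : ∫ p, G l p ∂(ν.prod ν) = ∫ p, F l p ∂(ν.prod ν) := by
    have s1 : ∫ p : ℝ × ℝ, G l p.swap ∂(ν.prod ν) = ∫ p, G l p ∂(ν.prod ν) :=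
      integral_prod_swap (G l)
    have s2 : ∫ p : ℝ × ℝ, F l p.swap ∂(ν.prod ν) = ∫ p, F l p ∂(ν.prod ν) :=
      integral_prod_swap (F l)
    have hFswap : Integrable (fun p : ℝ × ℝ => F l p.swap) (ν.prod ν) := hF.swap
    have h : (∫ p, G l p ∂(ν.prod ν)) + ∫ p : ℝ × ℝ, G l p.swap ∂(ν.prod ν)
        = (∫ p, F l p ∂(ν.prod ν)) + ∫ p : ℝ × ℝ, F l p.swap ∂(ν.prod ν) := by
      rw [← integral_add hG hGswap, ← integral_add hF hFswap]
      congr 1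
      funext p
      simpa using key l p
    rw [s1, s2] at h
    linarith
  rw [EG, EF]
  nlinarith [mul_le_mul_of_nonneg_left hJ hm.le]

end SymLSAux

/-- Symmetrized log-Sobolev inequality (Boucheron-Lugosi-Massart): for `X'` an independent
copy of `X` and any `λ ∈ ℝ`, `Ent(e^{λX}) ≤ E[e^{λX} q(λ(X'-X)_+)]` where
`q(x) = x(e^x - 1)`, provided the expectations are finite. -/
theorem symmetrized_log_sobolev
    {Ω : Type*} [MeasureSpace Ω] [IsProbabilityMeasure (ℙ : Measure Ω)]
    (X X' : Ω → ℝ) (hX : Measurable X) (hX' : Measurable X')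
    (hindep : IndepFun X X' ℙ) (hid : IdentDistrib X X' ℙ ℙ) (l : ℝ)
    (h1 : Integrable (fun ω => Real.exp (l * X ω)) ℙ)
    (h2 : Integrable (fun ω => Real.exp (l * X ω) * (l * X ω)) ℙ)
    (h3 : Integrable (fun ω => Real.exp (l * X ω) *
      (max (l * (X' ω - X ω)) 0 * (Real.exp (max (l * (X' ω - X ω)) 0) - 1))) ℙ) :
    (∫ ω, Real.exp (l * X ω) * (l * X ω))
        - (∫ ω, Real.exp (l * X ω)) * Real.log (∫ ω, Real.exp (l * X ω))
      ≤ ∫ ω, Real.exp (l * X ω) *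
          (max (l * (X' ω - X ω)) 0 * (Real.exp (max (l * (X' ω - X ω)) 0) - 1)) := by
  classical
  set ν : Measure ℝ := Measure.map X (ℙ : Measure Ω) with hν
  haveI hprob : IsProbabilityMeasure ν := Measure.isProbabilityMeasure_map hX.aemeasurable
  have hT : Measurable (fun ω => (X ω, X' ω)) := hX.prodMk hX'
  have hmapT : Measure.map (fun ω => (X ω, X' ω)) (ℙ : Measure Ω) = ν.prod ν := by
    rw [(ProbabilityTheory.indepFun_iff_map_prod_eq_prod_map_map hX.aemeasurable
      hX'.aemeasurable).mp hindep, ← hid.map_eq, hν]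
  -- rewrite λ(X'-X) as λX' - λX
  have hsub : ∀ ω, l * (X' ω - X ω) = l * X' ω - l * X ω := fun ω => mul_sub l _ _
  simp only [hsub] at h3 ⊢
  -- identify integrands with compositions
  have hGcomp : (fun ω => Real.exp (l * X ω) *
      (max (l * X' ω - l * X ω) 0 * (Real.exp (max (l * X' ω - l * X ω) 0) - 1)))
      = fun ω => SymLSAux.G l (X ω, X' ω) := rfl
  have m1 : Measurable fun x : ℝ => Real.exp (l * x) := by fun_prop
  have m2 : Measurable fun x : ℝ => Real.exp (l * x) * (l * x) := by fun_prop
  have hf : Integrable (fun x => Real.exp (l * x)) ν := by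
    rw [hν]
    exact (integrable_map_measure (g := fun x : ℝ => Real.exp (l * x)) m1.aestronglyMeasurable hX.aemeasurable).mpr h1
  have hfg : Integrable (fun x => Real.exp (l * x) * (l * x)) ν := by
    rw [hν]
    exact (integrable_map_measure (g := fun x : ℝ => Real.exp (l * x) * (l * x)) m2.aestronglyMeasurable hX.aemeasurable).mpr h2
  have hG : Integrable (SymLSAux.G l) (ν.prod ν) := by
    rw [← hmapT]
    refine (integrable_map_measure (SymLSAux.G_meas l).aestronglyMeasurable
      hT.aemeasurable).mpr ?_
    rw [hGcomp] at h3
    exact h3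
  have e1 : ∫ ω, Real.exp (l * X ω) ∂ℙ = ∫ x, Real.exp (l * x) ∂ν := by
    rw [hν, integral_map (f := fun x : ℝ => Real.exp (l * x)) hX.aemeasurable m1.aestronglyMeasurable]
  have e2 : ∫ ω, Real.exp (l * X ω) * (l * X ω) ∂ℙ
      = ∫ x, Real.exp (l * x) * (l * x) ∂ν := by
    rw [hν, integral_map (f := fun x : ℝ => Real.exp (l * x) * (l * x)) hX.aemeasurable m2.aestronglyMeasurable]
  have e3 : ∫ ω, Real.exp (l * X ω) *
      (max (l * X' ω - l * X ω) 0 * (Real.exp (max (l * X' ω - l * X ω) 0) - 1)) ∂ℙ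
      = ∫ p, SymLSAux.G l p ∂(ν.prod ν) := by
    rw [← hmapT, integral_map hT.aemeasurable (SymLSAux.G_meas l).aestronglyMeasurable]
    rfl
  rw [e1, e2, e3]
  exact SymLSAux.aux ν l hf hfg hG
end
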